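/- arXiv:1805.04898 — 2 statements merged into one kernel-verified Lean document; each statement's English description precedes it below -/
import Mathlib

section
/- Under Assumptions Q1, A1-i and A1-ii, for every x ∈ Δ^𝒜, every π ∈ ℝ^𝒜, and every family (z_a)_{a∈𝒜} in which each z_a is an exact-rate transition vector for a at π, the vector Δx := Σ_{a∈𝒜} x_a z_a satisfies Δx · g_*[π] = H(x)[π]. -/
open MeasureTheory Finset
open scoped Classical

/-- The maximal payoff among actions in `S`. -/
noncomputable def piStar {A : Type*} (π : A → ℝ) (S : Finset A) : ℝ :=
  if h : S.Nonempty then S.sup' h π else 0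

/-- The set of optimal actions in `S`: `b_*[π](S)`. -/
noncomputable def bStar {A : Type*} (π : A → ℝ) (S : Finset A) : Finset A :=
  S.filter (fun b => π b = piStar π S)

/-- `Q(q) = μ_Q((-∞, q])`. -/
noncomputable def Qfun (μQ : Measure ℝ) (q : ℝ) : ℝ := (μQ (Set.Iic q)).toReal

/-- The individual ex-ante first-order net gain `g_{a*}[π]`. -/
noncomputable def gain {A : Type*} [Fintype A] [DecidableEq A]
    (P : A → Finset A → ℝ) (μQ : Measure ℝ) (π : A → ℝ) (a : A) : ℝ :=
  ∑ A' ∈ (Finset.univ.erase a).powerset,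
    P a A' * ∫ q, max (piStar π A' - π a - q) 0 ∂μQ

/-- `g_{**}[π](S) = min_{b ∈ S} g_{b*}[π]`. -/
noncomputable def gainMin {A : Type*} [Fintype A] [DecidableEq A]
    (P : A → Finset A → ℝ) (μQ : Measure ℝ) (π : A → ℝ) (S : Finset A) : ℝ :=
  if h : S.Nonempty then S.inf' h (fun b => gain P μQ π b) else 0

/-- The individual ex-ante second-order net gain `h_{a*}[π]`. -/
noncomputable def gain2 {A : Type*} [Fintype A] [DecidableEq A]
    (P : A → Finset A → ℝ) (μQ : Measure ℝ) (π : A → ℝ) (a : A) : ℝ :=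
  ∑ A' ∈ (Finset.univ.erase a).powerset,
    P a A' * Qfun μQ (piStar π A' - π a) * (gainMin P μQ π A' - gain P μQ π a)

/-- The aggregate second-order gain `H(x)[π] = Σ_a x_a h_{a*}[π]`. -/
noncomputable def Hagg {A : Type*} [Fintype A] [DecidableEq A]
    (P : A → Finset A → ℝ) (μQ : Measure ℝ) (x π : A → ℝ) : ℝ :=
  ∑ a : A, x a * gain2 P μQ π a

/-! Each `z_a` moves mass from `a` onto best actions `b_*[π](A')` of the sampled sets, so the
identity reduces to `g_{b*}[π] = g_{**}[π](A')` for every `b ∈ b_*[π](A')`, i.e. to the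
first-order gain being antitone in one's own payoff. For `π b ≤ π a` and a threshold `r ≥ π a`,
the excess `max (π_*(A') - r) 0` is a nonnegative combination of the indicators of "`A'` meets
`{c : π c ≥ v}`" over levels `v > r`; these level sets avoid `a` and `b`, so by A1-ii the excess
has the same expectation under `P a` and `P b`. With `r = π a + q`, where `q ≥ 0` by Q1, this
bounds the integrand of `g_{a*}[π]` by that of `g_{b*}[π]`. -/

section Excess

variable {A : Type*}

lemma piStar_sub_const (φ : A → ℝ) (m : ℝ) {S : Finset A} (hS : S.Nonempty) :
    piStar (fun c => φ c - m) S = piStar φ S - m := by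
  simp only [piStar, dif_pos hS]
  exact (apply_sup'_eq_sup'_comp hS (· - m) fun x y => (max_sub_sub_right x y m).symm).symm

lemma le_piStar {φ : A → ℝ} {S : Finset A} {c : A} (hc : c ∈ S) : φ c ≤ piStar φ S := by
  rw [piStar, dif_pos ⟨c, hc⟩]
  exact le_sup' φ hc

lemma piStar_nonpos {φ : A → ℝ} {S : Finset A} (h : ∀ c ∈ S, φ c ≤ 0) : piStar φ S ≤ 0 := by
  rw [piStar]
  split_ifs with hS
  · exact sup'_le hS φ h
  · exact le_rfl

lemma max_piStar_zero_eq_add {φ : A → ℝ} {m : ℝ} (hm : 0 < m)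
    (hφm : ∀ c, 0 < φ c → m ≤ φ c) (S : Finset A) :
    max (piStar φ S) 0 = (if ∃ c ∈ S, 0 < φ c then m else 0)
      + max (piStar (fun c => φ c - m) S) 0 := by
  rcases S.eq_empty_or_nonempty with rfl | hS
  · simp [piStar]
  rw [piStar_sub_const φ m hS]
  split_ifs with hpos
  · obtain ⟨c, hc, hφc⟩ := hpos
    have := (hφm c hφc).trans (le_piStar (φ := φ) hc)
    rw [max_eq_left (by linarith), max_eq_left (by linarith)]
    ring
  · simp only [not_exists, not_and, not_lt] at hpos
    have := piStar_nonpos hpos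
    rw [max_eq_right this, max_eq_right (by linarith), add_zero]

variable [DecidableEq A]

theorem sum_mul_max_piStar_eq (C : Finset A) (s t : Finset (Finset A)) (μ ν : Finset A → ℝ)
    (hhit : ∀ S ⊆ C, ∑ A' ∈ s.filter (fun A' => (A' ∩ S).Nonempty), μ A'
      = ∑ A' ∈ t.filter (fun A' => (A' ∩ S).Nonempty), ν A')
    (φ : A → ℝ) (hφ : ∀ c ∉ C, φ c ≤ 0) :
    ∑ A' ∈ s, μ A' * max (piStar φ A') 0 = ∑ A' ∈ t, ν A' * max (piStar φ A') 0 := by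
  induction hn : (C.filter (fun c => 0 < φ c)).card using Nat.strong_induction_on generalizing φ
    with
  | _ n ih =>
  set K := C.filter (fun c => 0 < φ c) with hK
  have hmemK : ∀ c, c ∈ K ↔ 0 < φ c := fun c => by
    rw [hK, mem_filter]
    exact ⟨And.right, fun h => ⟨by_contra fun hc => (hφ c hc).not_gt h, h⟩⟩
  rcases K.eq_empty_or_nonempty with hK0 | hKne
  · have hzero : ∀ A' : Finset A, max (piStar φ A') 0 = 0 := fun A' =>
      max_eq_right (piStar_nonpos fun c _ => not_lt.1 fun h => by simpa [hK0] using (hmemK c).2 h)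
    simp [hzero]
  obtain ⟨c₀, hc₀K, hc₀⟩ := K.exists_mem_eq_inf' hKne φ
  set m := K.inf' hKne φ
  have hm : 0 < m := hc₀ ▸ (hmemK c₀).1 hc₀K
  have hφm : ∀ c, 0 < φ c → m ≤ φ c := fun c hc => inf'_le φ ((hmemK c).2 hc)
  have hlevel : ∀ A' : Finset A, (if ∃ c ∈ A', 0 < φ c then m else 0)
      = if (A' ∩ K).Nonempty then m else 0 := fun A' => by
    simp only [Finset.Nonempty, mem_inter, hmemK]
  have hsplit : ∀ (u : Finset (Finset A)) (w : Finset A → ℝ),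
      ∑ A' ∈ u, w A' * max (piStar φ A') 0
        = m * ∑ A' ∈ u.filter (fun A' => (A' ∩ K).Nonempty), w A'
          + ∑ A' ∈ u, w A' * max (piStar (fun c => φ c - m) A') 0 := fun u w => by
    simp only [max_piStar_zero_eq_add hm hφm, hlevel, mul_add, sum_add_distrib, sum_filter,
      mul_ite, mul_zero, mul_comm m, sum_mul, ite_mul, zero_mul]
  have hlt : (C.filter (fun c => 0 < φ c - m)).card < n := by
    rw [← hn]
    refine card_lt_card ⟨fun c hc => ?_, fun hsub => ?_⟩
    · rw [mem_filter] at hc ⊢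
      exact ⟨hc.1, by linarith [hc.2]⟩
    · have := (mem_filter.1 (hsub hc₀K)).2
      linarith
  rw [hsplit, hsplit, hhit K (filter_subset _ _),
    ih _ hlt (fun c => φ c - m) (fun c hc => by linarith [hφ c hc]) rfl]

end Excess

lemma ae_nonneg_of_Qfun_eq_zero (μQ : Measure ℝ) [IsFiniteMeasure μQ]
    (hQ : ∀ q : ℝ, q < 0 → Qfun μQ q = 0) : ∀ᵐ q ∂μQ, 0 ≤ q := by
  have hIic : ∀ q : ℝ, q < 0 → μQ (Set.Iic q) = 0 := fun q hq =>
    ((ENNReal.toReal_eq_zero_iff _).1 (hQ q hq)).resolve_right (measure_ne_top _ _)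
  have hIio : ⋃ n : ℕ, Set.Iic (-(1 / ((n : ℝ) + 1))) = Set.Iio 0 :=
    iUnion_Iic_eq_Iio_of_lt_of_tendsto (F := Filter.atTop)
      (fun n => neg_neg_of_pos Nat.one_div_pos_of_nat)
      (by simpa using (tendsto_one_div_add_atTop_nhds_zero_nat (𝕜 := ℝ)).neg)
  rw [ae_iff]
  simp only [not_le]
  change μQ (Set.Iio 0) = 0
  rw [← hIio]
  exact measure_iUnion_null fun n => hIic _ (neg_neg_of_pos Nat.one_div_pos_of_nat)

lemma integrable_max_sub_zero (μQ : Measure ℝ) [IsFiniteMeasure μQ]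
    (hae : ∀ᵐ q ∂μQ, 0 ≤ q) (t : ℝ) : Integrable (fun q => max (t - q) 0) μQ := by
  refine (integrable_const (max t 0)).mono' (by fun_prop) ?_
  filter_upwards [hae] with q hq
  rw [Real.norm_eq_abs, abs_of_nonneg (le_max_right _ _)]
  exact max_le_max (by linarith) le_rfl

section Gain

variable {A : Type*} [Fintype A] [DecidableEq A]

lemma gain_eq_integral_sum (P : A → Finset A → ℝ) (μQ : Measure ℝ) [IsFiniteMeasure μQ]
    (hae : ∀ᵐ q ∂μQ, 0 ≤ q) (π : A → ℝ) (a : A) :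
    gain P μQ π a = ∫ q, ∑ A' ∈ (univ.erase a).powerset,
      P a A' * max (piStar π A' - π a - q) 0 ∂μQ := by
  rw [gain, integral_finsetSum _ fun A' _ =>
    (integrable_max_sub_zero μQ hae _).const_mul (P a A')]
  simp only [integral_const_mul]

theorem gain_le_gain_of_le (P : A → Finset A → ℝ) (μQ : Measure ℝ) [IsFiniteMeasure μQ]
    (hPnn : ∀ a A', 0 ≤ P a A') (hPempty : ∀ a, P a (∅ : Finset A) = 0)
    (hQ : ∀ q : ℝ, q < 0 → Qfun μQ q = 0) {a b : A}
    (hab : ∀ S : Finset A, S ⊆ univ \ {a, b} →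
      ∑ A' ∈ (univ.erase a).powerset.filter (fun A' => (A' ∩ S).Nonempty), P a A'
        = ∑ A' ∈ (univ.erase b).powerset.filter (fun A' => (A' ∩ S).Nonempty), P b A')
    (π : A → ℝ) (hπ : π b ≤ π a) :
    gain P μQ π a ≤ gain P μQ π b := by
  have hae := ae_nonneg_of_Qfun_eq_zero μQ hQ
  rw [gain_eq_integral_sum P μQ hae, gain_eq_integral_sum P μQ hae]
  refine integral_mono_ae (integrable_finsetSum _ fun A' _ =>
      (integrable_max_sub_zero μQ hae _).const_mul (P a A'))
    (integrable_finsetSum _ fun A' _ => (integrable_max_sub_zero μQ hae _).const_mul (P b A')) ?_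
  filter_upwards [hae] with q hq
  have hshift : ∀ c A', P c A' * max (piStar π A' - π a - q) 0
      = P c A' * max (piStar (fun d => π d - (π a + q)) A') 0 := fun c A' => by
    rcases A'.eq_empty_or_nonempty with rfl | hA'
    · simp [hPempty]
    · rw [piStar_sub_const π _ hA', sub_sub]
  have houtside : ∀ c ∉ univ \ {a, b}, π c - (π a + q) ≤ 0 := fun c hc => by
    rcases (by simpa [or_iff_not_imp_left] using hc : c = a ∨ c = b) with rfl | rfl <;> linarith
  calc ∑ A' ∈ (univ.erase a).powerset, P a A' * max (piStar π A' - π a - q) 0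
      = ∑ A' ∈ (univ.erase b).powerset, P b A' * max (piStar π A' - π a - q) 0 := by
        simp only [hshift]
        exact sum_mul_max_piStar_eq _ _ _ _ _ hab _ houtside
    _ ≤ ∑ A' ∈ (univ.erase b).powerset, P b A' * max (piStar π A' - π b - q) 0 :=
        sum_le_sum fun A' _ =>
          mul_le_mul_of_nonneg_left (max_le_max (by linarith) le_rfl) (hPnn b A')

theorem gain_eq_gainMin_of_mem_bStar (P : A → Finset A → ℝ) (μQ : Measure ℝ) [IsFiniteMeasure μQ]
    (hPnn : ∀ a A', 0 ≤ P a A') (hPempty : ∀ a, P a (∅ : Finset A) = 0)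
    (hQ : ∀ q : ℝ, q < 0 → Qfun μQ q = 0)
    (hA1ii : ∀ a b : A, ∀ S : Finset A, S ⊆ univ \ {a, b} →
      ∑ A' ∈ (univ.erase a).powerset.filter (fun A' => (A' ∩ S).Nonempty), P a A'
        = ∑ A' ∈ (univ.erase b).powerset.filter (fun A' => (A' ∩ S).Nonempty), P b A')
    (π : A → ℝ) {S : Finset A} {b : A} (hb : b ∈ bStar π S) :
    gain P μQ π b = gainMin P μQ π S := by
  obtain ⟨hbS, hπb⟩ := mem_filter.1 hb
  rw [gainMin, dif_pos ⟨b, hbS⟩]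
  refine le_antisymm (le_inf' _ _ fun c hc => ?_) (inf'_le _ hbS)
  exact gain_le_gain_of_le P μQ hPnn hPempty hQ (hA1ii b c) π (hπb ▸ le_piStar hc)

theorem sum_mul_gain_eq_gainMin (P : A → Finset A → ℝ) (μQ : Measure ℝ) [IsFiniteMeasure μQ]
    (hPnn : ∀ a A', 0 ≤ P a A') (hPempty : ∀ a, P a (∅ : Finset A) = 0)
    (hQ : ∀ q : ℝ, q < 0 → Qfun μQ q = 0)
    (hA1ii : ∀ a b : A, ∀ S : Finset A, S ⊆ univ \ {a, b} →
      ∑ A' ∈ (univ.erase a).powerset.filter (fun A' => (A' ∩ S).Nonempty), P a A'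
        = ∑ A' ∈ (univ.erase b).powerset.filter (fun A' => (A' ∩ S).Nonempty), P b A')
    (π : A → ℝ) {S : Finset A} {y : A → ℝ} (hy : y ∈ stdSimplex ℝ A)
    (hsupp : ∀ b, y b ≠ 0 → b ∈ bStar π S) :
    ∑ b, y b * gain P μQ π b = gainMin P μQ π S := by
  have hterm : ∀ b, y b * gain P μQ π b = y b * gainMin P μQ π S := fun b => by
    by_cases hyb : y b = 0
    · simp [hyb]
    · rw [gain_eq_gainMin_of_mem_bStar P μQ hPnn hPempty hQ hA1ii π (hsupp b hyb)]
  simp only [hterm, ← sum_mul, hy.2, one_mul]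

lemma sum_transition_mul {ι : Type*} (s : Finset ι) (w : ι → ℝ) (y : ι → A → ℝ) (g : A → ℝ)
    (a : A) :
    ∑ b, (∑ i ∈ s, w i * (y i b - if b = a then 1 else 0)) * g b
      = ∑ i ∈ s, w i * (∑ b, y i b * g b - g a) := by
  simp only [sum_mul, mul_assoc, sub_mul, ite_mul, one_mul, zero_mul]
  rw [sum_comm]
  simp [← mul_sum, sum_sub_distrib]

end Gain

theorem stmt8_general {A : Type*} [Fintype A] [DecidableEq A]
    (P : A → Finset A → ℝ) (μQ : Measure ℝ) [IsProbabilityMeasure μQ]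
    (hPnn : ∀ a A', 0 ≤ P a A')
    (hPempty : ∀ a, P a (∅ : Finset A) = 0)
    -- Assumption Q1
    (hQ1a : ∀ q : ℝ, q < 0 → Qfun μQ q = 0)
    -- Assumption A1-ii
    (hA1ii : ∀ a b : A, ∀ S : Finset A, S ⊆ Finset.univ \ {a, b} →
      ∑ A' ∈ (Finset.univ.erase a).powerset.filter (fun A' => (A' ∩ S).Nonempty), P a A'
        = ∑ A' ∈ (Finset.univ.erase b).powerset.filter (fun A' => (A' ∩ S).Nonempty), P b A')
    (x : A → ℝ) (π : A → ℝ)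
    (y : A → Finset A → A → ℝ)
    (hy : ∀ a : A, ∀ A' ∈ (Finset.univ.erase a).powerset, A'.Nonempty →
      y a A' ∈ stdSimplex ℝ A ∧ ∀ b, y a A' b ≠ 0 → b ∈ bStar π A') :
    ∑ b : A,
        (∑ a : A, x a *
          (∑ A' ∈ (Finset.univ.erase a).powerset,
            P a A' * Qfun μQ (piStar π A' - π a) *
              (y a A' b - (if b = a then (1 : ℝ) else 0)))) * gain P μQ π b
      = Hagg P μQ x π := by
  have hterm : ∀ a, ∀ A' ∈ (univ.erase a).powerset,
      P a A' * Qfun μQ (piStar π A' - π a) * (∑ b, y a A' b * gain P μQ π b - gain P μQ π a)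
        = P a A' * Qfun μQ (piStar π A' - π a) * (gainMin P μQ π A' - gain P μQ π a) :=
    fun a A' hA' => by
      rcases A'.eq_empty_or_nonempty with rfl | hne
      · simp [hPempty]
      · obtain ⟨hyΔ, hysupp⟩ := hy a A' hA' hne
        rw [sum_mul_gain_eq_gainMin P μQ hPnn hPempty hQ1a hA1ii π hyΔ hysupp]
  calc _ = ∑ a, x a * ∑ b, (∑ A' ∈ (univ.erase a).powerset,
            P a A' * Qfun μQ (piStar π A' - π a) *
              (y a A' b - if b = a then 1 else 0)) * gain P μQ π b := by
        simp only [sum_mul, mul_sum, mul_assoc]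
        exact sum_comm
    _ = Hagg P μQ x π := by
        simp only [sum_transition_mul, Hagg, gain2]
        exact sum_congr rfl fun a _ => congrArg _ (sum_congr rfl (hterm a))

/-- For `Δx := Σ_a x_a z_a` built from exact-rate transition vectors `z_a`,
`Δx · g_*[π] = H(x)[π]`. -/
theorem stmt8 {A : Type*} [Fintype A] [DecidableEq A] [Nonempty A]
    (P : A → Finset A → ℝ) (μQ : Measure ℝ) [IsProbabilityMeasure μQ]
    (hPnn : ∀ a A', 0 ≤ P a A')
    (hPsupp : ∀ a A', ¬ A' ⊆ Finset.univ.erase a → P a A' = 0)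
    (hPempty : ∀ a, P a (∅ : Finset A) = 0)
    (hPsum : ∀ a, ∑ A' ∈ (Finset.univ.erase a).powerset, P a A' = 1)
    -- Assumption Q1
    (hQ1a : ∀ q : ℝ, q < 0 → Qfun μQ q = 0)
    (hQ1b : ∀ q : ℝ, 0 < q → 0 < Qfun μQ q)
    -- Assumption A1-i
    (hA1i : ∀ a b : A, b ≠ a →
      0 < ∑ A' ∈ (Finset.univ.erase a).powerset.filter (fun A' => b ∈ A'), P a A')
    -- Assumption A1-ii
    (hA1ii : ∀ a b : A, ∀ S : Finset A, S ⊆ Finset.univ \ {a, b} →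
      ∑ A' ∈ (Finset.univ.erase a).powerset.filter (fun A' => (A' ∩ S).Nonempty), P a A'
        = ∑ A' ∈ (Finset.univ.erase b).powerset.filter (fun A' => (A' ∩ S).Nonempty), P b A')
    (x : A → ℝ) (hx : x ∈ stdSimplex ℝ A) (π : A → ℝ)
    (y : A → Finset A → A → ℝ)
    (hy : ∀ a : A, ∀ A' ∈ (Finset.univ.erase a).powerset, A'.Nonempty →
      y a A' ∈ stdSimplex ℝ A ∧ ∀ b, y a A' b ≠ 0 → b ∈ bStar π A') :
    ∑ b : A,
        (∑ a : A, x a *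
          (∑ A' ∈ (Finset.univ.erase a).powerset,
            P a A' * Qfun μQ (piStar π A' - π a) *
              (y a A' b - (if b = a then (1 : ℝ) else 0)))) * gain P μQ π b
      = Hagg P μQ x π :=
  stmt8_general P μQ hPnn hPempty hQ1a hA1ii x π y hy
end

section
/- Let F be the restriction to Δ^𝒜 of a continuously differentiable map defined on an open neighborhood of Δ^𝒜 in ℝ^𝒜, with derivative DF, and suppose F is statically stable: z·DF(x)z ≤ 0 for all x ∈ Δ^𝒜 and z ∈ TΔ^𝒜. Assume Q1, A1-i and A1-ii, fix x ∈ Δ^𝒜, and assume the regularity condition holds at (a, F(x)) for every a ∈ 𝒜. Let z_a be the unique exact-rate transition vector for a at F(x) and Δx := Σ_{a∈𝒜} x_a z_a. Then t ↦ G^F(x + tΔx) has a right derivative at t = 0 equal to Δx·DF(x)Δx + H^F(x), hence ≤ H^F(x) ≤ 0; moreover this right derivative equals 0 if and only if x ∈ NE(F). -/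
/-!
Write `φ(c) = ∫ (c - q)⁺ dμ_Q`, so that `g_a = Σ_{A'} ℙ_a(A') φ(π_*(A') - π_a)`. The increments of
`φ` are squeezed between values of `Q`, hence `φ' = Q` at atomless points, and under the regularity
condition the derivative of `G^F` along `Δx` is `Σ_b Δx_b g_b` (reweighting of the population) plus
`Σ_a x_a Σ_{A'} ℙ_a(A') Q(π_*(A') - π_a) ((DF Δx)_{b_*(A')} - (DF Δx)_a) = Δx · DF(x) Δx`.

A1-ii says that every set `S` is hit with the same probability from `b` and from `c`; Möbius
inversion over the subsets of `𝒜 ∖ {b, c}` turns this into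
`ℙ_b(R) + ℙ_b(R ∪ {c}) = ℙ_c(R) + ℙ_c(R ∪ {b})`, from which `g` is antitone in the payoff. So a
revising agent moves to the available action of least gain, `Σ_b Δx_b g_b = H^F(x)`, and every term
of `H` is `≤ 0`; by A1-i it is `< 0` at a used suboptimal action. Since `Δx` is tangent to the
simplex, static stability gives `Δx · DF(x) Δx ≤ 0`. At a Nash equilibrium nobody switches, so
`Δx = 0` and `H^F(x) = 0`.
-/

open MeasureTheory Finset
open scoped Classical

/-- The aggregate first-order gain `G(x)[π] = Σ_a x_a g_{a*}[π]`. -/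
noncomputable def Gagg {A : Type*} [Fintype A] [DecidableEq A]
    (P : A → Finset A → ℝ) (μQ : Measure ℝ) (x π : A → ℝ) : ℝ :=
  ∑ a : A, x a * gain P μQ π a

/-- `Δx = Σ_a x_a z_a`, where `z_a` is the exact-rate transition vector for `a` at `π`
whose target is the optimal available action chosen by the selector `sel`. -/
noncomputable def deltaX {A : Type*} [Fintype A] [DecidableEq A]
    (P : A → Finset A → ℝ) (μQ : Measure ℝ) (π x : A → ℝ)
    (sel : A → Finset A → A) : A → ℝ :=
  fun b => ∑ a : A, x a *
    (∑ A' ∈ (Finset.univ.erase a).powerset,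
      P a A' * Qfun μQ (piStar π A' - π a) *
        ((if b = sel a A' then (1 : ℝ) else 0) - (if b = a then (1 : ℝ) else 0)))

open Filter Topology

noncomputable def expectedNetGain (μ : Measure ℝ) (c : ℝ) : ℝ := ∫ q, max (c - q) 0 ∂μ

section ExpectedNetGain

variable {μ : Measure ℝ}

lemma Qfun_nonneg (c : ℝ) : 0 ≤ Qfun μ c := ENNReal.toReal_nonneg

lemma measure_Iio_zero_eq_zero [IsFiniteMeasure μ] (hQ : ∀ q : ℝ, q < 0 → Qfun μ q = 0) :
    μ (Set.Iio 0) = 0 := by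
  have hneg : ∀ n : ℕ, -(1 / ((n : ℝ) + 1)) < 0 := fun n => neg_neg_of_pos (by positivity)
  have hlim : Tendsto (fun n : ℕ => -(1 / ((n : ℝ) + 1))) atTop (𝓝 0) := by
    simpa using (tendsto_one_div_add_atTop_nhds_zero_nat (𝕜 := ℝ)).neg
  rw [← iUnion_Iic_eq_Iio_of_lt_of_tendsto hneg hlim]
  refine measure_iUnion_null fun n => ?_
  have h := hQ _ (hneg n)
  rwa [Qfun, ENNReal.toReal_eq_zero_iff, or_iff_left (measure_ne_top μ _)] at h

lemma Qfun_eq_zero_of_nonpos (h0 : μ (Set.Iio 0) = 0) {q : ℝ} (hq : q ≤ 0) (hatom : μ {q} = 0) :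
    Qfun μ q = 0 := by
  rw [Qfun, ← Set.Iio_union_right, measure_union_null
    (measure_mono_null (Set.Iio_subset_Iio hq) h0) hatom, ENNReal.toReal_zero]

lemma Qfun_eq_zero_of_neg (h0 : μ (Set.Iio 0) = 0) {q : ℝ} (hq : q < 0) : Qfun μ q = 0 := by
  rw [Qfun, measure_mono_null (Set.Iic_subset_Iio.2 hq) h0, ENNReal.toReal_zero]

lemma Qfun_continuousAt [IsProbabilityMeasure μ] {c : ℝ} (hc : μ {c} = 0) :
    ContinuousAt (Qfun μ) c := by
  have hQ : Qfun μ = ProbabilityTheory.cdf μ := by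
    funext q; rw [ProbabilityTheory.cdf_eq_real]; rfl
  have hjump := (ProbabilityTheory.cdf μ).measure_singleton c
  rw [ProbabilityTheory.measure_cdf, hc, eq_comm, ENNReal.ofReal_eq_zero, sub_nonpos] at hjump
  rw [hQ, (ProbabilityTheory.monotone_cdf μ).continuousAt_iff_leftLim_eq_rightLim,
    StieltjesFunction.rightLim_eq]
  exact le_antisymm ((ProbabilityTheory.monotone_cdf μ).leftLim_le le_rfl) hjump

lemma integral_indicator_Iic_const (c k : ℝ) :
    ∫ q, (Set.Iic c).indicator (fun _ => k) q ∂μ = k * Qfun μ c := by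
  rw [integral_indicator_const _ measurableSet_Iic, smul_eq_mul, mul_comm, measureReal_def, Qfun]

lemma ae_nonneg_of_measure_Iio_eq_zero (h0 : μ (Set.Iio 0) = 0) : ∀ᵐ q ∂μ, 0 ≤ q :=
  (mem_ae_iff.2 (by rwa [Set.compl_Ici]) : Set.Ici (0 : ℝ) ∈ ae μ)

lemma integrable_max_sub_zero_s11 [IsFiniteMeasure μ] (h0 : μ (Set.Iio 0) = 0) (c : ℝ) :
    Integrable (fun q => max (c - q) 0) μ := by
  refine Integrable.mono' (integrable_const (max c 0)) (by fun_prop) ?_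
  filter_upwards [ae_nonneg_of_measure_Iio_eq_zero h0] with q hq
  rw [Real.norm_eq_abs, abs_of_nonneg (le_max_right _ _)]
  exact max_le_max (by linarith) le_rfl

lemma expectedNetGain_nonneg (c : ℝ) : 0 ≤ expectedNetGain μ c :=
  integral_nonneg fun _ => le_max_right _ _

lemma expectedNetGain_eq_zero_of_nonpos (h0 : μ (Set.Iio 0) = 0) {c : ℝ} (hc : c ≤ 0) :
    expectedNetGain μ c = 0 := by
  refine integral_eq_zero_of_ae ?_
  filter_upwards [ae_nonneg_of_measure_Iio_eq_zero h0] with q hq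
  exact max_eq_right (by linarith)

lemma expectedNetGain_max_of_nonpos (h0 : μ (Set.Iio 0) = 0) {x : ℝ} (hx : x ≤ 0) (y : ℝ) :
    expectedNetGain μ (max x y) = expectedNetGain μ y := by
  rcases le_total x y with hxy | hyx
  · rw [max_eq_right hxy]
  · rw [max_eq_left hyx, expectedNetGain_eq_zero_of_nonpos h0 hx,
      expectedNetGain_eq_zero_of_nonpos h0 (hyx.trans hx)]

lemma expectedNetGain_sub_mem_Icc [IsFiniteMeasure μ] (h0 : μ (Set.Iio 0) = 0) {c c' : ℝ}
    (h : c ≤ c') :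
    expectedNetGain μ c' - expectedNetGain μ c ∈
      Set.Icc ((c' - c) * Qfun μ c) ((c' - c) * Qfun μ c') := by
  have hint := integrable_max_sub_zero_s11 h0
  rw [expectedNetGain, expectedNetGain, ← integral_sub (hint c') (hint c),
    ← integral_indicator_Iic_const, ← integral_indicator_Iic_const]
  refine ⟨integral_mono ((integrable_const _).indicator measurableSet_Iic)
    ((hint c').sub (hint c)) fun q => ?_, integral_mono ((hint c').sub (hint c))
    ((integrable_const _).indicator measurableSet_Iic) fun q => ?_⟩
  all_goals
    simp only [Set.indicator, Set.mem_Iic]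
    split_ifs <;> simp only [max_def] <;> split_ifs <;> linarith

lemma expectedNetGain_mono [IsFiniteMeasure μ] (h0 : μ (Set.Iio 0) = 0) :
    Monotone (expectedNetGain μ) := fun c c' h => by
  have := (expectedNetGain_sub_mem_Icc h0 h).1
  nlinarith [Qfun_nonneg (μ := μ) c]

lemma expectedNetGain_pos [IsFiniteMeasure μ] (h0 : μ (Set.Iio 0) = 0) {c : ℝ} (hc : 0 < c)
    (hQ : 0 < Qfun μ (c / 2)) : 0 < expectedNetGain μ c := by
  have := (expectedNetGain_sub_mem_Icc h0 (half_le_self hc.le)).1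
  nlinarith [expectedNetGain_nonneg (μ := μ) (c / 2)]

lemma hasDerivAt_expectedNetGain [IsProbabilityMeasure μ] (h0 : μ (Set.Iio 0) = 0) {c : ℝ}
    (hc : μ {c} = 0) : HasDerivAt (expectedNetGain μ) (Qfun μ c) c := by
  -- the remainder is squeezed by `(y - c) * (Q y - Q c)`, which is `o(y - c)` as `Q` is
  -- continuous at the atomless point `c`
  have hrem : ∀ y, 0 ≤ expectedNetGain μ y - expectedNetGain μ c - (y - c) * Qfun μ c ∧
      expectedNetGain μ y - expectedNetGain μ c - (y - c) * Qfun μ c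
        ≤ (y - c) * (Qfun μ y - Qfun μ c) := by
    intro y
    rcases le_total c y with h | h <;>
    · obtain ⟨h1, h2⟩ := expectedNetGain_sub_mem_Icc h0 h
      constructor <;> nlinarith
  have hQ : (fun y => Qfun μ y - Qfun μ c) =o[𝓝 c] (fun _ => (1 : ℝ)) :=
    (Asymptotics.isLittleO_one_iff ℝ).2
      (tendsto_sub_nhds_zero_iff.2 (Qfun_continuousAt hc).tendsto)
  rw [hasDerivAt_iff_isLittleO]
  refine Asymptotics.IsBigO.trans_isLittleO (g := fun y => (y - c) * (Qfun μ y - Qfun μ c))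
    (Asymptotics.IsBigO.of_bound 1 (Eventually.of_forall fun y => ?_)) ?_
  · obtain ⟨h1, h2⟩ := hrem y
    rw [smul_eq_mul, one_mul, Real.norm_of_nonneg h1, Real.norm_of_nonneg (h1.trans h2)]
    exact h2
  · simpa using (Asymptotics.isBigO_refl (fun y => y - c) (𝓝 c)).mul_isLittleO hQ

end ExpectedNetGain

section PiStar

variable {A : Type*} {π : A → ℝ} {S : Finset A}

lemma piStar_of_nonempty (h : S.Nonempty) : piStar π S = S.sup' h π := dif_pos h

lemma le_piStar_s11 {d : A} (hd : d ∈ S) : π d ≤ piStar π S := by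
  rw [piStar_of_nonempty ⟨d, hd⟩]
  exact Finset.le_sup' π hd

lemma piStar_le (h : S.Nonempty) {m : ℝ} (hm : ∀ d ∈ S, π d ≤ m) : piStar π S ≤ m := by
  rw [piStar_of_nonempty h]
  exact Finset.sup'_le h π hm

lemma piStar_eq_of_forall_le {s : A} (hs : s ∈ S) (hmax : ∀ d ∈ S, π d ≤ π s) :
    piStar π S = π s :=
  le_antisymm (piStar_le ⟨s, hs⟩ hmax) (le_piStar_s11 hs)

lemma piStar_singleton (c : A) : piStar π {c} = π c :=
  piStar_eq_of_forall_le (Finset.mem_singleton_self c) fun _ hd => by rw [Finset.mem_singleton.1 hd]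

lemma piStar_insert [DecidableEq A] (h : S.Nonempty) (c : A) :
    piStar π (insert c S) = max (π c) (piStar π S) := by
  rw [piStar_of_nonempty h, piStar_of_nonempty (Finset.insert_nonempty c S), Finset.sup'_insert]

lemma mem_of_mem_bStar {s : A} (hs : s ∈ bStar π S) : s ∈ S := (Finset.mem_filter.1 hs).1

lemma piStar_eq_of_mem_bStar {s : A} (hs : s ∈ bStar π S) : π s = piStar π S :=
  (Finset.mem_filter.1 hs).2

lemma lt_of_bStar_eq_singleton {s d : A} (hS : bStar π S = {s}) (hd : d ∈ S) (hds : d ≠ s) :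
    π d < π s := by
  have hs : s ∈ bStar π S := hS ▸ Finset.mem_singleton_self s
  refine (le_piStar_s11 hd).trans_eq (piStar_eq_of_mem_bStar hs).symm |>.lt_of_ne fun h => hds ?_
  have : d ∈ bStar π S := Finset.mem_filter.2 ⟨hd, h.trans (piStar_eq_of_mem_bStar hs)⟩
  rwa [hS, Finset.mem_singleton] at this

lemma hasDerivAt_piStar {γ : ℝ → A → ℝ} {γ' : A → ℝ} {t₀ : ℝ} {s : A}
    (hγ : ∀ d, HasDerivAt (fun t => γ t d) (γ' d) t₀) (hS : bStar (γ t₀) S = {s}) :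
    HasDerivAt (fun t => piStar (γ t) S) (γ' s) t₀ := by
  have hs : s ∈ S := mem_of_mem_bStar (hS ▸ Finset.mem_singleton_self s)
  have hmax : ∀ᶠ t in 𝓝 t₀, ∀ d ∈ S, γ t d ≤ γ t s := by
    refine (Finset.eventually_all S).2 fun d hd => ?_
    rcases eq_or_ne d s with rfl | hds
    · exact Eventually.of_forall fun _ => le_rfl
    · exact ((hγ d).continuousAt.eventually_lt (hγ s).continuousAt
        (lt_of_bStar_eq_singleton hS hd hds)).mono fun _ => le_of_lt
  exact (hγ s).congr_of_eventuallyEq (hmax.mono fun t ht => piStar_eq_of_forall_le hs ht)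

end PiStar

lemma Finset.eq_singleton_of_card_eq_one_of_mem {α : Type*} {s : Finset α} {a : α}
    (hs : s.card = 1) (ha : a ∈ s) : s = {a} :=
  Finset.eq_singleton_iff_unique_mem.2 ⟨ha, fun b hb => Finset.card_le_one.1 hs.le b hb a ha⟩

lemma eq_zero_of_sum_powerset_eq_zero {α M : Type*} [AddCommMonoid M] {f : Finset α → M}
    {D : Finset α} (h : ∀ R ⊆ D, ∑ T ∈ R.powerset, f T = 0) : ∀ R ⊆ D, f R = 0 := by
  intro R
  induction R using Finset.strongInduction with
  | H R ih =>
    intro hR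
    have hsum := h R hR
    rwa [← Finset.add_sum_erase _ _ (Finset.mem_powerset_self R),
      Finset.sum_eq_zero fun T hT => ?_, add_zero] at hsum
    obtain ⟨hne, hsub⟩ := Finset.mem_erase.1 hT
    exact ih T (Finset.ssubset_iff_subset_ne.2 ⟨Finset.mem_powerset.1 hsub, hne⟩)
      ((Finset.mem_powerset.1 hsub).trans hR)

section Marginal

variable {A : Type*} [Fintype A] [DecidableEq A] {P : A → Finset A → ℝ}

/-- Assumption A1-ii. -/
def HittingProbIndependent (P : A → Finset A → ℝ) : Prop :=
  ∀ a b : A, ∀ S : Finset A, S ⊆ Finset.univ \ {a, b} →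
    ∑ A' ∈ (Finset.univ.erase a).powerset.filter (fun A' => (A' ∩ S).Nonempty), P a A'
      = ∑ A' ∈ (Finset.univ.erase b).powerset.filter (fun A' => (A' ∩ S).Nonempty), P b A'

lemma filter_powerset_erase_disjoint {u v : A} (huv : u ≠ v) {R : Finset A}
    (hR : R ⊆ Finset.univ \ {u, v}) :
    (Finset.univ.erase u).powerset.filter
        (fun A' => ¬ (A' ∩ ((Finset.univ \ {u, v}) \ R)).Nonempty) = (insert v R).powerset := by
  ext A'
  simp only [Finset.mem_filter, Finset.mem_powerset, Finset.not_nonempty_iff_eq_empty,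
    Finset.eq_empty_iff_forall_notMem, Finset.subset_iff, Finset.mem_inter, Finset.mem_sdiff,
    Finset.mem_erase, Finset.mem_insert, Finset.mem_univ, Finset.mem_singleton] at hR ⊢
  grind

lemma sum_powerset_insert_eq_of_hittingProbIndependent
    (hPsum : ∀ a, ∑ A' ∈ (Finset.univ.erase a).powerset, P a A' = 1)
    (hP : HittingProbIndependent P) {b c : A} (hbc : b ≠ c) {R : Finset A}
    (hR : R ⊆ Finset.univ \ {b, c}) :
    ∑ T ∈ (insert c R).powerset, P b T = ∑ T ∈ (insert b R).powerset, P c T := by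
  have hmiss : ∀ u v, u ≠ v → R ⊆ Finset.univ \ {u, v} →
      ∑ T ∈ (insert v R).powerset, P u T = 1 - ∑ A' ∈ (Finset.univ.erase u).powerset.filter
        (fun A' => (A' ∩ ((Finset.univ \ {u, v}) \ R)).Nonempty), P u A' := by
    intro u v huv hRuv
    have hsplit := Finset.sum_filter_add_sum_filter_not (Finset.univ.erase u).powerset
      (fun A' => (A' ∩ ((Finset.univ \ {u, v}) \ R)).Nonempty) (P u)
    rw [hPsum u, filter_powerset_erase_disjoint huv hRuv] at hsplit
    linarith
  rw [hmiss b c hbc hR, hmiss c b hbc.symm (Finset.pair_comm b c ▸ hR), Finset.pair_comm c b,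
    hP b c _ Finset.sdiff_subset]

lemma add_insert_eq_of_hittingProbIndependent
    (hPsum : ∀ a, ∑ A' ∈ (Finset.univ.erase a).powerset, P a A' = 1)
    (hP : HittingProbIndependent P) {b c : A} (hbc : b ≠ c) {R : Finset A}
    (hR : R ⊆ Finset.univ \ {b, c}) :
    P b R + P b (insert c R) = P c R + P c (insert b R) := by
  refine sub_eq_zero.1 (eq_zero_of_sum_powerset_eq_zero (D := Finset.univ \ {b, c})
    (f := fun T => P b T + P b (insert c T) - (P c T + P c (insert b T))) (fun R' hR' => ?_) R hR)
  have hsum := sum_powerset_insert_eq_of_hittingProbIndependent hPsum hP hbc hR'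
  rw [Finset.sum_powerset_insert (fun h => by simpa using hR' h),
    Finset.sum_powerset_insert (fun h => by simpa using hR' h)] at hsum
  simp only [Finset.sum_sub_distrib, Finset.sum_add_distrib, hsum, sub_self]

structure IsRevisionKernel (P : A → Finset A → ℝ) : Prop where
  nonneg : ∀ a A', 0 ≤ P a A'
  apply_empty : ∀ a, P a ∅ = 0
  sum_powerset_erase : ∀ a, ∑ A' ∈ (Finset.univ.erase a).powerset, P a A' = 1
  hittingProbIndependent : HittingProbIndependent P

end Marginal

lemma expectedNetGain_piStar_insert_sub {A : Type*} [DecidableEq A] {μ : Measure ℝ} {π : A → ℝ}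
    (h0 : μ (Set.Iio 0) = 0) {T : Finset A}
    (hT : T.Nonempty) {b c : A} (hcb : π c ≤ π b) :
    expectedNetGain μ (piStar π (insert c T) - π b) = expectedNetGain μ (piStar π T - π b) := by
  rw [piStar_insert hT, ← max_sub_sub_right, expectedNetGain_max_of_nonpos h0 (by linarith)]

lemma expectedNetGain_piStar_insert_eq_insert_self {A : Type*} [DecidableEq A] {μ : Measure ℝ}
    {π : A → ℝ} (h0 : μ (Set.Iio 0) = 0) {b c : A} (hcb : π c ≤ π b) (T : Finset A) :
    expectedNetGain μ (piStar π (insert c T) - π b)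
      = expectedNetGain μ (piStar π (insert b T) - π b) := by
  rcases T.eq_empty_or_nonempty with rfl | hT
  · simp only [insert_empty_eq, piStar_singleton, sub_self]
    rw [expectedNetGain_eq_zero_of_nonpos h0 (by linarith),
      expectedNetGain_eq_zero_of_nonpos h0 le_rfl]
  · exact (expectedNetGain_piStar_insert_sub h0 hT hcb).trans
      (expectedNetGain_piStar_insert_sub h0 hT le_rfl).symm

section Gain

variable {A : Type*} [Fintype A] [DecidableEq A] {P : A → Finset A → ℝ} {μ : Measure ℝ}
  {π : A → ℝ}

lemma gain_eq_sum_expectedNetGain (a : A) :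
    gain P μ π a = ∑ A' ∈ (Finset.univ.erase a).powerset,
      P a A' * expectedNetGain μ (piStar π A' - π a) := rfl

lemma univ_erase_eq_insert_sdiff_pair {u v : A} (huv : u ≠ v) :
    Finset.univ.erase u = insert v (Finset.univ \ {u, v}) := by
  ext d
  by_cases hdv : d = v <;> simp [hdv, huv.symm]

lemma gain_anti [IsFiniteMeasure μ] (h0 : μ (Set.Iio 0) = 0) (hP : IsRevisionKernel P) {b c : A}
    (hcb : π c ≤ π b) :
    gain P μ π b ≤ gain P μ π c := by
  rcases eq_or_ne b c with rfl | hbc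
  · exact le_rfl
  set D : Finset A := Finset.univ \ {b, c}
  have hcD : c ∉ D := by simp [D]
  have hbD : b ∉ D := by simp [D]
  -- Revision sets of `b` are `T` or `insert c T`, those of `c` are `T` or `insert b T`, with
  -- `T ⊆ D`. Each of them yields a net gain `w T` to `b` and at least `w T` to `c`, and A1-ii
  -- makes the total weights of the two pairs equal.
  set w : Finset A → ℝ := fun T => expectedNetGain μ (piStar π (insert b T) - π b)
  have hgb : gain P μ π b = ∑ T ∈ D.powerset, (P b T + P b (insert c T)) * w T := by
    rw [gain_eq_sum_expectedNetGain, univ_erase_eq_insert_sdiff_pair hbc,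
      Finset.sum_powerset_insert hcD, ← Finset.sum_add_distrib]
    refine Finset.sum_congr rfl fun T _ => ?_
    rw [add_mul, expectedNetGain_piStar_insert_eq_insert_self h0 hcb]
    rcases T.eq_empty_or_nonempty with rfl | hT
    · rw [hP.apply_empty, zero_mul, zero_mul]
    · rw [← expectedNetGain_piStar_insert_sub h0 hT le_rfl]
  have hgc : ∑ T ∈ D.powerset, (P c T + P c (insert b T)) * w T ≤ gain P μ π c := by
    rw [gain_eq_sum_expectedNetGain, univ_erase_eq_insert_sdiff_pair hbc.symm,
      Finset.pair_comm, Finset.sum_powerset_insert hbD, ← Finset.sum_add_distrib]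
    refine Finset.sum_le_sum fun T _ => ?_
    rw [add_mul]
    refine add_le_add ?_ (mul_le_mul_of_nonneg_left
      (expectedNetGain_mono h0 (by linarith)) (hP.nonneg _ _))
    rcases T.eq_empty_or_nonempty with rfl | hT
    · rw [hP.apply_empty, zero_mul, zero_mul]
    · exact mul_le_mul_of_nonneg_left ((expectedNetGain_piStar_insert_sub h0 hT le_rfl).trans_le
        (expectedNetGain_mono h0 (by linarith))) (hP.nonneg _ _)
  refine hgb ▸ (Finset.sum_congr rfl fun T hT => ?_).trans_le hgc
  rw [add_insert_eq_of_hittingProbIndependent hP.sum_powerset_erase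
    hP.hittingProbIndependent hbc (Finset.mem_powerset.1 hT)]

lemma gain_eq_zero_of_forall_le (h0 : μ (Set.Iio 0) = 0) (hPempty : ∀ a, P a ∅ = 0) {c : A}
    (hmax : ∀ d, π d ≤ π c) : gain P μ π c = 0 := by
  rw [gain_eq_sum_expectedNetGain]
  refine Finset.sum_eq_zero fun A' _ => ?_
  rcases A'.eq_empty_or_nonempty with rfl | hA'
  · rw [hPempty, zero_mul]
  · rw [expectedNetGain_eq_zero_of_nonpos h0 (sub_nonpos.2 (piStar_le hA' fun d _ => hmax d)),
      mul_zero]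

lemma gain_pos [IsFiniteMeasure μ] (h0 : μ (Set.Iio 0) = 0) (hPnn : ∀ a A', 0 ≤ P a A')
    (hQ : ∀ q : ℝ, 0 < q → 0 < Qfun μ q) {a b : A} {A₀ : Finset A}
    (hA₀ : A₀ ∈ (Finset.univ.erase a).powerset) (hbA₀ : b ∈ A₀) (hPA₀ : 0 < P a A₀)
    (hab : π a < π b) : 0 < gain P μ π a := by
  have hφ : 0 < expectedNetGain μ (piStar π A₀ - π a) :=
    (expectedNetGain_pos h0 (sub_pos.2 hab) (hQ _ (by linarith))).trans_le
      (expectedNetGain_mono h0 (by linarith [le_piStar_s11 (π := π) hbA₀]))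
  rw [gain_eq_sum_expectedNetGain]
  exact (mul_pos hPA₀ hφ).trans_le (Finset.single_le_sum
    (f := fun A' => P a A' * expectedNetGain μ (piStar π A' - π a))
    (fun A' _ => mul_nonneg (hPnn a A') (expectedNetGain_nonneg _)) hA₀)

lemma gainMin_le {S : Finset A} {b : A} (hb : b ∈ S) : gainMin P μ π S ≤ gain P μ π b := by
  rw [gainMin, dif_pos ⟨b, hb⟩]
  exact Finset.inf'_le _ hb

lemma gainMin_le_gain_of_le_piStar [IsFiniteMeasure μ] (h0 : μ (Set.Iio 0) = 0)
    (hP : IsRevisionKernel P) {S : Finset A} (hS : S.Nonempty) {a : A} (ha : π a ≤ piStar π S) :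
    gainMin P μ π S ≤ gain P μ π a := by
  obtain ⟨s, hs, hsmax⟩ := Finset.exists_mem_eq_sup' hS π
  rw [piStar_of_nonempty hS, hsmax] at ha
  exact (gainMin_le hs).trans (gain_anti h0 hP ha)

lemma gain_eq_gainMin_of_mem_bStar_s11 [IsFiniteMeasure μ] (h0 : μ (Set.Iio 0) = 0)
    (hP : IsRevisionKernel P) {S : Finset A} {s : A} (hs : s ∈ bStar π S) :
    gain P μ π s = gainMin P μ π S := by
  have hsS := mem_of_mem_bStar hs
  rw [gainMin, dif_pos ⟨s, hsS⟩]
  refine le_antisymm (Finset.le_inf' _ _ fun d hd => gain_anti h0 hP ?_) (Finset.inf'_le _ hsS)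
  exact (le_piStar_s11 hd).trans_eq (piStar_eq_of_mem_bStar hs).symm

lemma gain2_term_nonpos [IsFiniteMeasure μ] (h0 : μ (Set.Iio 0) = 0) (hP : IsRevisionKernel P)
    (a : A) (A' : Finset A) :
    P a A' * Qfun μ (piStar π A' - π a) * (gainMin P μ π A' - gain P μ π a) ≤ 0 := by
  rcases A'.eq_empty_or_nonempty with rfl | hA'
  · rw [hP.apply_empty, zero_mul, zero_mul]
  rcases lt_or_ge (piStar π A') (π a) with hlt | hle
  · rw [Qfun_eq_zero_of_neg h0 (sub_neg.2 hlt), mul_zero, zero_mul]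
  · exact mul_nonpos_of_nonneg_of_nonpos (mul_nonneg (hP.nonneg a A') (Qfun_nonneg _))
      (sub_nonpos.2 (gainMin_le_gain_of_le_piStar h0 hP hA' hle))

lemma gain2_nonpos [IsFiniteMeasure μ] (h0 : μ (Set.Iio 0) = 0) (hP : IsRevisionKernel P)
    (a : A) : gain2 P μ π a ≤ 0 :=
  Finset.sum_nonpos fun A' _ => gain2_term_nonpos h0 hP a A'

lemma gain2_neg [IsFiniteMeasure μ] (h0 : μ (Set.Iio 0) = 0) (hP : IsRevisionKernel P)
    (hQ : ∀ q : ℝ, 0 < q → 0 < Qfun μ q) {a b : A}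
    (hA1i : 0 < ∑ A' ∈ (Finset.univ.erase a).powerset.filter (fun A' => b ∈ A'), P a A')
    (hbmax : ∀ d, π d ≤ π b) (hab : π a < π b) : gain2 P μ π a < 0 := by
  obtain ⟨A₀, hA₀f, hPA₀⟩ := Finset.exists_lt_of_sum_lt (f := fun _ => (0 : ℝ))
    (by simpa using hA1i)
  obtain ⟨hA₀, hbA₀⟩ := Finset.mem_filter.1 hA₀f
  have hA₀max : piStar π A₀ = π b := piStar_eq_of_forall_le hbA₀ fun d _ => hbmax d
  have hterm : P a A₀ * Qfun μ (piStar π A₀ - π a) * (gainMin P μ π A₀ - gain P μ π a) < 0 := by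
    refine mul_neg_of_pos_of_neg (mul_pos hPA₀ (hA₀max ▸ hQ _ (sub_pos.2 hab))) ?_
    have hgb : gain P μ π b = 0 := gain_eq_zero_of_forall_le h0 hP.apply_empty hbmax
    linarith [gainMin_le (P := P) (μ := μ) (π := π) hbA₀,
      gain_pos h0 hP.nonneg hQ hA₀ hbA₀ hPA₀ hab]
  calc gain2 P μ π a < ∑ A' ∈ (Finset.univ.erase a).powerset, (0 : ℝ) :=
        Finset.sum_lt_sum (fun A' _ => gain2_term_nonpos h0 hP a A') ⟨A₀, hA₀, hterm⟩
    _ = 0 := Finset.sum_const_zero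

lemma IsRevisionKernel.nonempty_of_pos (hP : IsRevisionKernel P) {a : A} {A' : Finset A}
    (h : 0 < P a A') : A'.Nonempty :=
  Finset.nonempty_iff_ne_empty.2 fun hA' => h.ne' (hA' ▸ hP.apply_empty a)

lemma Hagg_nonpos [IsFiniteMeasure μ] (h0 : μ (Set.Iio 0) = 0) (hP : IsRevisionKernel P)
    {x : A → ℝ} (hx : x ∈ stdSimplex ℝ A) : Hagg P μ x π ≤ 0 :=
  Finset.sum_nonpos fun a _ => mul_nonpos_of_nonneg_of_nonpos (hx.1 a) (gain2_nonpos h0 hP a)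

lemma sum_deltaX_mul (x : A → ℝ) (sel : A → Finset A → A) (f : A → ℝ) :
    ∑ b, deltaX P μ π x sel b * f b = ∑ a, x a * ∑ A' ∈ (Finset.univ.erase a).powerset,
      P a A' * Qfun μ (piStar π A' - π a) * (f (sel a A') - f a) := by
  simp only [deltaX, Finset.sum_mul, Finset.mul_sum, mul_assoc]
  rw [Finset.sum_comm]
  refine Finset.sum_congr rfl fun a _ => ?_
  rw [Finset.sum_comm]
  refine Finset.sum_congr rfl fun A' _ => ?_
  simp only [sub_mul, ite_mul, one_mul, zero_mul, mul_sub, Finset.sum_sub_distrib,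
    ← Finset.mul_sum, Finset.sum_ite_eq', Finset.mem_univ, if_true]

lemma sum_deltaX (x : A → ℝ) (sel : A → Finset A → A) : ∑ b, deltaX P μ π x sel b = 0 := by
  simpa using sum_deltaX_mul (P := P) (μ := μ) (π := π) x sel fun _ => 1

lemma sum_deltaX_mul_gain [IsFiniteMeasure μ] (h0 : μ (Set.Iio 0) = 0) (hP : IsRevisionKernel P)
    (x : A → ℝ) {sel : A → Finset A → A}
    (hsel : ∀ a, ∀ A' ∈ (Finset.univ.erase a).powerset, 0 < P a A' → sel a A' ∈ bStar π A') :
    ∑ b, deltaX P μ π x sel b * gain P μ π b = Hagg P μ x π := by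
  rw [sum_deltaX_mul, Hagg]
  refine Finset.sum_congr rfl fun a _ => congrArg _ (Finset.sum_congr rfl fun A' hA' => ?_)
  rcases (hP.nonneg a A').eq_or_lt with hPA' | hPA'
  · rw [← hPA', zero_mul, zero_mul, zero_mul]
  · rw [gain_eq_gainMin_of_mem_bStar_s11 h0 hP (hsel a A' hA' hPA')]

lemma mul_Qfun_eq_zero_of_forall_le (h0 : μ (Set.Iio 0) = 0) (hP : IsRevisionKernel P) {a : A}
    (hmax : ∀ b, π b ≤ π a)
    (hatom : ∀ A' ∈ (Finset.univ.erase a).powerset, 0 < P a A' → μ {piStar π A' - π a} = 0)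
    {A' : Finset A} (hA' : A' ∈ (Finset.univ.erase a).powerset) :
    P a A' * Qfun μ (piStar π A' - π a) = 0 := by
  rcases (hP.nonneg a A').eq_or_lt with hPA' | hPA'
  · rw [← hPA', zero_mul]
  · rw [Qfun_eq_zero_of_nonpos h0 (sub_nonpos.2 (piStar_le (hP.nonempty_of_pos hPA')
      fun d _ => hmax d)) (hatom A' hA' hPA'), mul_zero]

variable [Nonempty A]

lemma mul_mul_Qfun_eq_zero_of_nash (h0 : μ (Set.Iio 0) = 0) (hP : IsRevisionKernel P) {x : A → ℝ}
    (hx : x ∈ stdSimplex ℝ A)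
    (hatom : ∀ a, ∀ A' ∈ (Finset.univ.erase a).powerset, 0 < P a A' →
      μ {piStar π A' - π a} = 0)
    (hNE : ∀ a, 0 < x a → π a = Finset.univ.sup' Finset.univ_nonempty π)
    (a : A) {A' : Finset A} (hA' : A' ∈ (Finset.univ.erase a).powerset) :
    x a * (P a A' * Qfun μ (piStar π A' - π a)) = 0 := by
  rcases (hx.1 a).eq_or_lt with hxa | hxa
  · rw [← hxa, zero_mul]
  · refine mul_eq_zero_of_right _ (mul_Qfun_eq_zero_of_forall_le h0 hP (fun b => ?_) (hatom a) hA')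
    exact (hNE a hxa).symm ▸ Finset.le_sup' π (Finset.mem_univ b)

lemma deltaX_eq_zero_of_nash (h0 : μ (Set.Iio 0) = 0) (hP : IsRevisionKernel P) {x : A → ℝ}
    (hx : x ∈ stdSimplex ℝ A)
    (hatom : ∀ a, ∀ A' ∈ (Finset.univ.erase a).powerset, 0 < P a A' →
      μ {piStar π A' - π a} = 0)
    (hNE : ∀ a, 0 < x a → π a = Finset.univ.sup' Finset.univ_nonempty π)
    (sel : A → Finset A → A) : deltaX P μ π x sel = 0 := by
  funext b
  simp only [deltaX, Finset.mul_sum, Pi.zero_apply]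
  refine Finset.sum_eq_zero fun a _ => Finset.sum_eq_zero fun A' hA' => ?_
  rw [← mul_assoc, mul_mul_Qfun_eq_zero_of_nash h0 hP hx hatom hNE a hA', zero_mul]

lemma Hagg_eq_zero_iff [IsFiniteMeasure μ] (h0 : μ (Set.Iio 0) = 0) (hP : IsRevisionKernel P)
    (hQ : ∀ q : ℝ, 0 < q → 0 < Qfun μ q)
    (hA1i : ∀ a b : A, b ≠ a →
      0 < ∑ A' ∈ (Finset.univ.erase a).powerset.filter (fun A' => b ∈ A'), P a A')
    {x : A → ℝ} (hx : x ∈ stdSimplex ℝ A)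
    (hatom : ∀ a, ∀ A' ∈ (Finset.univ.erase a).powerset, 0 < P a A' →
      μ {piStar π A' - π a} = 0) :
    Hagg P μ x π = 0 ↔ ∀ a, 0 < x a → π a = Finset.univ.sup' Finset.univ_nonempty π := by
  constructor
  · intro hH a hxa
    obtain ⟨b, -, hb⟩ := Finset.exists_mem_eq_sup' Finset.univ_nonempty π
    have hbmax : ∀ d, π d ≤ π b := fun d => hb ▸ Finset.le_sup' π (Finset.mem_univ d)
    rw [hb]
    by_contra hab
    have hab : π a < π b := (hbmax a).lt_of_ne hab
    have hxg := (Finset.sum_eq_zero_iff_of_nonpos fun a _ => mul_nonpos_of_nonneg_of_nonpos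
      (hx.1 a) (gain2_nonpos h0 hP a)).1 hH a (Finset.mem_univ a)
    exact (mul_neg_of_pos_of_neg hxa
      (gain2_neg h0 hP hQ (hA1i a b fun h => hab.ne (h ▸ rfl)) hbmax hab)).ne hxg
  · intro hNE
    refine Finset.sum_eq_zero fun a _ => ?_
    rw [gain2, Finset.mul_sum]
    refine Finset.sum_eq_zero fun A' hA' => ?_
    rw [← mul_assoc, mul_mul_Qfun_eq_zero_of_nash h0 hP hx hatom hNE a hA', zero_mul]

end Gain

section Derivative

variable {A : Type*} [Fintype A] [DecidableEq A] {P : A → Finset A → ℝ} {μ : Measure ℝ}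
  [IsProbabilityMeasure μ]

lemma hasDerivAt_gain (h0 : μ (Set.Iio 0) = 0) (hPnn : ∀ a A', 0 ≤ P a A')
    {γ : ℝ → A → ℝ} {γ' : A → ℝ} {t₀ : ℝ} (hγ : ∀ d, HasDerivAt (fun t => γ t d) (γ' d) t₀)
    {a : A} {sel : Finset A → A}
    (hreg : ∀ A' ∈ (Finset.univ.erase a).powerset, 0 < P a A' →
      bStar (γ t₀) A' = {sel A'} ∧ μ {piStar (γ t₀) A' - γ t₀ a} = 0) :
    HasDerivAt (fun t => gain P μ (γ t) a) (∑ A' ∈ (Finset.univ.erase a).powerset,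
      P a A' * Qfun μ (piStar (γ t₀) A' - γ t₀ a) * (γ' (sel A') - γ' a)) t₀ := by
  simp only [gain_eq_sum_expectedNetGain]
  refine HasDerivAt.fun_sum fun A' hA' => ?_
  rcases (hPnn a A').eq_or_lt with hPA' | hPA'
  · simpa only [← hPA', zero_mul] using hasDerivAt_const t₀ (0 : ℝ)
  obtain ⟨hsel, hatom⟩ := hreg A' hA' hPA'
  rw [mul_assoc]
  exact ((hasDerivAt_expectedNetGain h0 hatom).comp t₀
    ((hasDerivAt_piStar hγ hsel).sub (hγ a))).const_mul (P a A')

lemma hasDerivAt_Gagg (h0 : μ (Set.Iio 0) = 0) (hPnn : ∀ a A', 0 ≤ P a A')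
    {ξ γ : ℝ → A → ℝ} {ξ' γ' : A → ℝ} {t₀ : ℝ}
    (hξ : ∀ a, HasDerivAt (fun t => ξ t a) (ξ' a) t₀)
    (hγ : ∀ d, HasDerivAt (fun t => γ t d) (γ' d) t₀) {sel : A → Finset A → A}
    (hreg : ∀ a, ∀ A' ∈ (Finset.univ.erase a).powerset, 0 < P a A' →
      bStar (γ t₀) A' = {sel a A'} ∧ μ {piStar (γ t₀) A' - γ t₀ a} = 0) :
    HasDerivAt (fun t => Gagg P μ (ξ t) (γ t)) (∑ b, ξ' b * gain P μ (γ t₀) b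
      + ∑ b, deltaX P μ (γ t₀) (ξ t₀) sel b * γ' b) t₀ := by
  rw [sum_deltaX_mul, ← Finset.sum_add_distrib]
  exact HasDerivAt.fun_sum fun a _ => (hξ a).mul (hasDerivAt_gain h0 hPnn hγ (hreg a))

lemma hasDerivAt_Gagg_add_smul (h0 : μ (Set.Iio 0) = 0) (hPnn : ∀ a A', 0 ≤ P a A')
    {Φ : (A → ℝ) → A → ℝ} {x Δ : A → ℝ} (hΦ : DifferentiableAt ℝ Φ x) {sel : A → Finset A → A}
    (hreg : ∀ a, ∀ A' ∈ (Finset.univ.erase a).powerset, 0 < P a A' →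
      bStar (Φ x) A' = {sel a A'} ∧ μ {piStar (Φ x) A' - Φ x a} = 0) :
    HasDerivAt (fun t : ℝ => Gagg P μ (x + t • Δ) (Φ (x + t • Δ)))
      (∑ b, Δ b * gain P μ (Φ x) b + ∑ b, deltaX P μ (Φ x) x sel b * fderiv ℝ Φ x Δ b) 0 := by
  have hline : HasDerivAt (fun t : ℝ => x + t • Δ) Δ 0 := by
    simpa using ((hasDerivAt_id (0 : ℝ)).smul_const Δ).const_add x
  have hpath : HasDerivAt (fun t : ℝ => Φ (x + t • Δ)) (fderiv ℝ Φ x Δ) 0 :=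
    (by simpa using hΦ.hasFDerivAt : HasFDerivAt Φ (fderiv ℝ Φ x) (x + (0 : ℝ) • Δ)).comp_hasDerivAt
      0 hline
  simpa using hasDerivAt_Gagg h0 hPnn (hasDerivAt_pi.1 hline) (hasDerivAt_pi.1 hpath)
    (sel := sel) (by simpa using hreg)

end Derivative

theorem stmt11_general {A : Type*} [Fintype A] [DecidableEq A] [Nonempty A]
    (P : A → Finset A → ℝ) (μQ : Measure ℝ) [IsProbabilityMeasure μQ]
    (hPnn : ∀ a A', 0 ≤ P a A')
    (hPempty : ∀ a, P a (∅ : Finset A) = 0)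
    (hPsum : ∀ a, ∑ A' ∈ (Finset.univ.erase a).powerset, P a A' = 1)
    -- Assumption Q1
    (hQ1a : ∀ q : ℝ, q < 0 → Qfun μQ q = 0)
    (hQ1b : ∀ q : ℝ, 0 < q → 0 < Qfun μQ q)
    -- Assumption A1-i
    (hA1i : ∀ a b : A, b ≠ a →
      0 < ∑ A' ∈ (Finset.univ.erase a).powerset.filter (fun A' => b ∈ A'), P a A')
    -- Assumption A1-ii
    (hA1ii : ∀ a b : A, ∀ S : Finset A, S ⊆ Finset.univ \ {a, b} →
      ∑ A' ∈ (Finset.univ.erase a).powerset.filter (fun A' => (A' ∩ S).Nonempty), P a A'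
        = ∑ A' ∈ (Finset.univ.erase b).powerset.filter (fun A' => (A' ∩ S).Nonempty), P b A')
    -- the game: restriction to the simplex of a `C¹` map `Φ` on an open neighborhood `U`
    (U : Set (A → ℝ)) (hU : IsOpen U) (hΔU : stdSimplex ℝ A ⊆ U)
    (Φ : (A → ℝ) → (A → ℝ)) (hΦ : ContDiffOn ℝ 1 Φ U)
    -- static stability: `z · DF(x) z ≤ 0` for all `x ∈ Δ^𝒜` and `z ∈ TΔ^𝒜`
    (hstable : ∀ x ∈ stdSimplex ℝ A, ∀ z : A → ℝ, ∑ a : A, z a = 0 →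
      ∑ a : A, z a * (fderiv ℝ Φ x z) a ≤ 0)
    (x : A → ℝ) (hx : x ∈ stdSimplex ℝ A)
    -- the regularity condition at `(a, F(x))` for every `a`
    (hreg : ∀ a : A, ∀ A' ∈ (Finset.univ.erase a).powerset, A'.Nonempty → 0 < P a A' →
      (bStar (Φ x) A').card = 1 ∧ μQ {piStar (Φ x) A' - Φ x a} = 0)
    (sel : A → Finset A → A)
    (hsel : ∀ a : A, ∀ A' ∈ (Finset.univ.erase a).powerset, A'.Nonempty →
      sel a A' ∈ bStar (Φ x) A') :
    HasDerivWithinAt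
      (fun t : ℝ => Gagg P μQ (x + t • deltaX P μQ (Φ x) x sel)
        (Φ (x + t • deltaX P μQ (Φ x) x sel)))
      (∑ b : A, deltaX P μQ (Φ x) x sel b *
          (fderiv ℝ Φ x (deltaX P μQ (Φ x) x sel)) b
        + Hagg P μQ x (Φ x))
      (Set.Ici (0 : ℝ)) 0 ∧
    (∑ b : A, deltaX P μQ (Φ x) x sel b *
          (fderiv ℝ Φ x (deltaX P μQ (Φ x) x sel)) b
        + Hagg P μQ x (Φ x)) ≤ Hagg P μQ x (Φ x) ∧
    Hagg P μQ x (Φ x) ≤ 0 ∧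
    ((∑ b : A, deltaX P μQ (Φ x) x sel b *
          (fderiv ℝ Φ x (deltaX P μQ (Φ x) x sel)) b
        + Hagg P μQ x (Φ x)) = 0 ↔
      ∀ a : A, 0 < x a → Φ x a = Finset.univ.sup' Finset.univ_nonempty (Φ x)) := by
  set π := Φ x
  set Δ := deltaX P μQ π x sel
  have h0 : μQ (Set.Iio 0) = 0 := measure_Iio_zero_eq_zero hQ1a
  have hP : IsRevisionKernel P := ⟨hPnn, hPempty, hPsum, hA1ii⟩
  have hsel' : ∀ a, ∀ A' ∈ (Finset.univ.erase a).powerset, 0 < P a A' →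
      sel a A' ∈ bStar π A' := fun a A' hA' hPA' => hsel a A' hA' (hP.nonempty_of_pos hPA')
  have hatom : ∀ a, ∀ A' ∈ (Finset.univ.erase a).powerset, 0 < P a A' →
      μQ {piStar π A' - π a} = 0 := fun a A' hA' hPA' =>
    (hreg a A' hA' (hP.nonempty_of_pos hPA') hPA').2
  have hunique : ∀ a, ∀ A' ∈ (Finset.univ.erase a).powerset, 0 < P a A' →
      bStar π A' = {sel a A'} := fun a A' hA' hPA' =>
    Finset.eq_singleton_of_card_eq_one_of_mem (hreg a A' hA' (hP.nonempty_of_pos hPA') hPA').1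
      (hsel' a A' hA' hPA')
  have hderiv := hasDerivAt_Gagg_add_smul (Δ := Δ) h0 hPnn
    ((hΦ.differentiableOn one_ne_zero).differentiableAt (hU.mem_nhds (hΔU hx)))
    fun a A' hA' hPA' => ⟨hunique a A' hA' hPA', hatom a A' hA' hPA'⟩
  rw [sum_deltaX_mul_gain h0 hP x hsel', add_comm] at hderiv
  have hH : Hagg P μQ x π ≤ 0 := Hagg_nonpos h0 hP hx
  have hquad : ∑ b, Δ b * fderiv ℝ Φ x Δ b ≤ 0 := hstable x hx Δ (sum_deltaX x sel)
  have hnash := Hagg_eq_zero_iff h0 hP hQ1b hA1i hx hatom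
  refine ⟨hderiv.hasDerivWithinAt, by linarith, hH, fun h => hnash.1 (by linarith),
    fun hNE => ?_⟩
  rw [show Δ = 0 from deltaX_eq_zero_of_nash h0 hP hx hatom hNE sel, hnash.2 hNE]
  simp

/-- In a statically stable game `F` (the restriction to the simplex of a `C¹` map `Φ`),
the aggregate net gain `G^F` has right derivative `Δx·DF(x)Δx + H^F(x) ≤ H^F(x) ≤ 0`
along the transition direction `Δx`, and the right derivative vanishes exactly at Nash
equilibria. -/
theorem stmt11 {A : Type*} [Fintype A] [DecidableEq A] [Nonempty A]
    (P : A → Finset A → ℝ) (μQ : Measure ℝ) [IsProbabilityMeasure μQ]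
    (hPnn : ∀ a A', 0 ≤ P a A')
    (hPsupp : ∀ a A', ¬ A' ⊆ Finset.univ.erase a → P a A' = 0)
    (hPempty : ∀ a, P a (∅ : Finset A) = 0)
    (hPsum : ∀ a, ∑ A' ∈ (Finset.univ.erase a).powerset, P a A' = 1)
    -- Assumption Q1
    (hQ1a : ∀ q : ℝ, q < 0 → Qfun μQ q = 0)
    (hQ1b : ∀ q : ℝ, 0 < q → 0 < Qfun μQ q)
    -- Assumption A1-i
    (hA1i : ∀ a b : A, b ≠ a →
      0 < ∑ A' ∈ (Finset.univ.erase a).powerset.filter (fun A' => b ∈ A'), P a A')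
    -- Assumption A1-ii
    (hA1ii : ∀ a b : A, ∀ S : Finset A, S ⊆ Finset.univ \ {a, b} →
      ∑ A' ∈ (Finset.univ.erase a).powerset.filter (fun A' => (A' ∩ S).Nonempty), P a A'
        = ∑ A' ∈ (Finset.univ.erase b).powerset.filter (fun A' => (A' ∩ S).Nonempty), P b A')
    -- the game: restriction to the simplex of a `C¹` map `Φ` on an open neighborhood `U`
    (U : Set (A → ℝ)) (hU : IsOpen U) (hΔU : stdSimplex ℝ A ⊆ U)
    (Φ : (A → ℝ) → (A → ℝ)) (hΦ : ContDiffOn ℝ 1 Φ U)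
    -- static stability: `z · DF(x) z ≤ 0` for all `x ∈ Δ^𝒜` and `z ∈ TΔ^𝒜`
    (hstable : ∀ x ∈ stdSimplex ℝ A, ∀ z : A → ℝ, ∑ a : A, z a = 0 →
      ∑ a : A, z a * (fderiv ℝ Φ x z) a ≤ 0)
    (x : A → ℝ) (hx : x ∈ stdSimplex ℝ A)
    -- the regularity condition at `(a, F(x))` for every `a`
    (hreg : ∀ a : A, ∀ A' ∈ (Finset.univ.erase a).powerset, A'.Nonempty → 0 < P a A' →
      (bStar (Φ x) A').card = 1 ∧ μQ {piStar (Φ x) A' - Φ x a} = 0)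
    (sel : A → Finset A → A)
    (hsel : ∀ a : A, ∀ A' ∈ (Finset.univ.erase a).powerset, A'.Nonempty →
      sel a A' ∈ bStar (Φ x) A') :
    HasDerivWithinAt
      (fun t : ℝ => Gagg P μQ (x + t • deltaX P μQ (Φ x) x sel)
        (Φ (x + t • deltaX P μQ (Φ x) x sel)))
      (∑ b : A, deltaX P μQ (Φ x) x sel b *
          (fderiv ℝ Φ x (deltaX P μQ (Φ x) x sel)) b
        + Hagg P μQ x (Φ x))
      (Set.Ici (0 : ℝ)) 0 ∧
    (∑ b : A, deltaX P μQ (Φ x) x sel b *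
          (fderiv ℝ Φ x (deltaX P μQ (Φ x) x sel)) b
        + Hagg P μQ x (Φ x)) ≤ Hagg P μQ x (Φ x) ∧
    Hagg P μQ x (Φ x) ≤ 0 ∧
    ((∑ b : A, deltaX P μQ (Φ x) x sel b *
          (fderiv ℝ Φ x (deltaX P μQ (Φ x) x sel)) b
        + Hagg P μQ x (Φ x)) = 0 ↔
      ∀ a : A, 0 < x a → Φ x a = Finset.univ.sup' Finset.univ_nonempty (Φ x)) :=
  stmt11_general P μQ hPnn hPempty hPsum hQ1a hQ1b hA1i hA1ii U hU hΔU Φ hΦ hstable x hx hreg sel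
    hsel
end
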